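/- For every m, n ≥ 1, the number of sets of 2mn cells in a 2n×2m board with no two cells diagonally adjacent is exactly (binomial(m+n, n))². -/

import Mathlib

/-- Two cells are diagonally adjacent (a pawn attack) if their rows and
columns each differ by exactly 1. -/
def PawnAdj {a b : ℕ} (p q : Fin a × Fin b) : Prop :=
  |((p.1 : ℕ) : ℤ) - ((q.1 : ℕ) : ℤ)| = 1 ∧ |((p.2 : ℕ) : ℤ) - ((q.2 : ℕ) : ℤ)| = 1

instance {a b : ℕ} (p q : Fin a × Fin b) : Decidable (PawnAdj p q) := by
  unfold PawnAdj; infer_instance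

/-- A set of pawns is nonattacking if no two distinct cells are diagonally adjacent. -/
def Nonatt {a b : ℕ} (S : Finset (Fin a × Fin b)) : Prop :=
  ∀ p ∈ S, ∀ q ∈ S, p ≠ q → ¬ PawnAdj p q

instance {a b : ℕ} (S : Finset (Fin a × Fin b)) : Decidable (Nonatt S) := by
  unfold Nonatt; infer_instance

/-!
Cut the board into `n × m` blocks of size `2 × 2`. The main diagonal and the anti-diagonal
of each block are pairs of mutually attacking cells, and these `2mn` pairs partition the
board, so a nonattacking set of size `2mn` takes exactly one cell from each pair. In block
row `i`, the blocks taking the top-left cell form an initial segment, of length `K i`, and so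
do the blocks taking the bottom-left cell, of length `L i`; attacks across neighbouring block
rows force `K` to be antitone and `L` monotone, and every such pair `(K, L)` arises from
exactly one nonattacking set. Monotone maps `Fin n → Fin (m + 1)` are multisets of size `n`
on `m + 1` letters, counted by stars and bars.
-/

open Finset

namespace Fin

lemma val_orderSucc_of_not_isMax {n : ℕ} {a : Fin n} (ha : ¬IsMax a) :
    ((Order.succ a : Fin n) : ℕ) = a + 1 := by
  obtain ⟨b, hab⟩ := not_isMax_iff.1 ha
  have hlt := Fin.lt_def.1 (Order.lt_succ_of_not_isMax ha)
  have hle : Order.succ a ≤ ⟨a + 1, by omega⟩ := Order.succ_le_of_lt (Fin.lt_def.2 (by simp))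
  have : ((Order.succ a : Fin n) : ℕ) ≤ a + 1 := Fin.le_def.1 hle
  omega

lemma antitone_of_forall_val_add_one {n : ℕ} {α : Type*} [Preorder α] {f : Fin n → α}
    (h : ∀ a b : Fin n, (b : ℕ) = a + 1 → f b ≤ f a) : Antitone f :=
  antitone_of_succ_le fun _ ha => h _ _ (val_orderSucc_of_not_isMax ha)

lemma monotone_of_forall_val_add_one {n : ℕ} {α : Type*} [Preorder α] {f : Fin n → α}
    (h : ∀ a b : Fin n, (b : ℕ) = a + 1 → f a ≤ f b) : Monotone f :=
  monotone_of_le_succ fun _ ha => h _ _ (val_orderSucc_of_not_isMax ha)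

lemma iff_val_lt_card_filter_of_antitone {m : ℕ} {P : Fin m → Prop} [DecidablePred P]
    (hP : Antitone P) (j : Fin m) : P j ↔ (j : ℕ) < #{k | P k} := by
  constructor
  · intro hj
    have := card_le_card (s := Iic j) (t := {k | P k}) fun k hk =>
      mem_filter.2 ⟨mem_univ k, hP (mem_Iic.1 hk) hj⟩
    rw [card_Iic] at this
    omega
  · intro hj
    by_contra hnot
    have := card_le_card (s := {k | P k}) (t := Iio j) fun k hk =>
      mem_Iio.2 (lt_of_not_ge fun hjk => hnot (hP hjk (mem_filter.1 hk).2))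
    rw [card_Iio] at this
    omega

def monotoneEquivSym (α : Type*) [LinearOrder α] (n : ℕ) :
    {f : Fin n → α // Monotone f} ≃ Sym α n where
  toFun f := Sym.mk (List.ofFn f.1) (by simp)
  invFun s := ⟨fun i => ((s : Multiset α).sort (· ≤ ·))[i.1]'(by simp),
    fun _ _ hij => List.sortedLE_iff_pairwise.2 (Multiset.pairwise_sort _ _) |>.monotone_get hij⟩
  left_inv f := by
    have hsort : (↑(List.ofFn f.1) : Multiset α).sort (· ≤ ·) = List.ofFn f.1 :=
      List.Perm.eq_of_sortedLE (List.sortedLE_iff_pairwise.2 (Multiset.pairwise_sort _ _))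
        (List.sortedLE_ofFn_iff.2 f.2) (Multiset.coe_eq_coe.1 (Multiset.sort_eq _ _))
    ext i
    simp only [Sym.coe_mk, hsort, List.getElem_ofFn]
  right_inv s := by
    ext1
    conv_rhs => rw [← Multiset.sort_eq (s : Multiset α) (· ≤ ·)]
    exact congrArg _ (List.ext_getElem (by simp) (by simp))

lemma card_filter_monotone (α : Type*) [Fintype α] [LinearOrder α] (n : ℕ) :
    #{f : Fin n → α | Monotone f} = (Fintype.card α + n - 1).choose n := by
  rw [← Fintype.card_subtype, Fintype.card_congr (monotoneEquivSym α n), Sym.card_sym_eq_choose]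

lemma card_filter_antitone (α : Type*) [Fintype α] [LinearOrder α] (n : ℕ) :
    #{f : Fin n → α | Antitone f} = (Fintype.card α + n - 1).choose n :=
  card_filter_monotone αᵒᵈ n

end Fin

lemma pawnAdj_iff {a b : ℕ} {p q : Fin a × Fin b} :
    PawnAdj p q ↔ ((p.1 : ℕ) = q.1 + 1 ∨ (q.1 : ℕ) = p.1 + 1) ∧
      ((p.2 : ℕ) = q.2 + 1 ∨ (q.2 : ℕ) = p.2 + 1) := by
  rw [PawnAdj, abs_eq zero_le_one, abs_eq zero_le_one]
  omega

lemma PawnAdj.ne {a b : ℕ} {p q : Fin a × Fin b} (h : PawnAdj p q) : p ≠ q := by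
  rintro rfl
  rw [pawnAdj_iff] at h
  omega

lemma Nonatt.not_pawnAdj {a b : ℕ} {S : Finset (Fin a × Fin b)} (hS : Nonatt S)
    {p q : Fin a × Fin b} (hp : p ∈ S) (hq : q ∈ S) : ¬PawnAdj p q :=
  fun h => hS p hp q hq h.ne h

namespace PawnBoard

variable {m n : ℕ}

def cell (i : Fin n) (j : Fin m) (a b : Fin 2) : Fin (2 * n) × Fin (2 * m) :=
  (⟨2 * i + a, by omega⟩, ⟨2 * j + b, by omega⟩)

/-- `true` marks the main diagonal `{(0, 0), (1, 1)}` of the `2 × 2` block. -/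
def blockDiag (p : Fin (2 * n) × Fin (2 * m)) : Fin n × Fin m × Bool :=
  (⟨p.1 / 2, by omega⟩, ⟨p.2 / 2, by omega⟩, decide ((p.1 : ℕ) % 2 = p.2 % 2))

lemma pawnAdj_cell_iff {i i' : Fin n} {j j' : Fin m} {a b a' b' : Fin 2} :
    PawnAdj (cell i j a b) (cell i' j' a' b') ↔
      (2 * (i : ℕ) + a = 2 * i' + a' + 1 ∨ 2 * (i' : ℕ) + a' = 2 * i + a + 1) ∧
      (2 * (j : ℕ) + b = 2 * j' + b' + 1 ∨ 2 * (j' : ℕ) + b' = 2 * j + b + 1) :=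
  pawnAdj_iff

lemma blockDiag_eq_true_iff {p : Fin (2 * n) × Fin (2 * m)} {i : Fin n} {j : Fin m} :
    blockDiag p = (i, j, true) ↔ p = cell i j 0 0 ∨ p = cell i j 1 1 := by
  simp only [blockDiag, cell, Prod.ext_iff, Fin.ext_iff, decide_eq_true_eq]
  omega

lemma blockDiag_eq_false_iff {p : Fin (2 * n) × Fin (2 * m)} {i : Fin n} {j : Fin m} :
    blockDiag p = (i, j, false) ↔ p = cell i j 1 0 ∨ p = cell i j 0 1 := by
  simp only [blockDiag, cell, Prod.ext_iff, Fin.ext_iff, decide_eq_false_iff_not]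
  omega

lemma pawnAdj_of_blockDiag_eq {p q : Fin (2 * n) × Fin (2 * m)} (h : blockDiag p = blockDiag q)
    (hne : p ≠ q) : PawnAdj p q := by
  simp only [blockDiag, Prod.ext_iff, Fin.ext_iff, ne_eq, decide_eq_decide] at h hne
  rw [pawnAdj_iff]
  omega

lemma blockDiag_cell (i : Fin n) (j : Fin m) (a b : Fin 2) :
    blockDiag (cell i j a b) = (i, j, decide (a = b)) := by
  simp only [blockDiag, cell, Prod.ext_iff, Fin.ext_iff]
  exact ⟨by omega, by omega, Bool.decide_congr (by omega)⟩

def staircaseCell (K L : Fin n → Fin (m + 1)) :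
    Fin n × Fin m × Bool → Fin (2 * n) × Fin (2 * m)
  | (i, j, true) => if (j : ℕ) < K i then cell i j 0 0 else cell i j 1 1
  | (i, j, false) => if (j : ℕ) < L i then cell i j 1 0 else cell i j 0 1

def staircase (K L : Fin n → Fin (m + 1)) : Finset (Fin (2 * n) × Fin (2 * m)) :=
  univ.image (staircaseCell K L)

lemma blockDiag_staircaseCell (K L : Fin n → Fin (m + 1)) :
    Function.LeftInverse blockDiag (staircaseCell K L) := by
  rintro ⟨i, j, _ | _⟩ <;> simp only [staircaseCell] <;> split_ifs <;> simp [blockDiag_cell]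

lemma card_staircase (K L : Fin n → Fin (m + 1)) : #(staircase K L) = 2 * m * n := by
  rw [staircase, card_image_of_injective _ (blockDiag_staircaseCell K L).injective]
  simp only [card_univ, Fintype.card_prod, Fintype.card_fin, Fintype.card_bool]
  ring

lemma mem_staircase_iff {K L : Fin n → Fin (m + 1)} {p : Fin (2 * n) × Fin (2 * m)} :
    p ∈ staircase K L ↔ staircaseCell K L (blockDiag p) = p := by
  refine ⟨fun h => ?_, fun h => mem_image.2 ⟨_, mem_univ _, h⟩⟩
  obtain ⟨x, -, rfl⟩ := mem_image.1 h
  rw [blockDiag_staircaseCell]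

lemma cell_zero_zero_mem_staircase {K L : Fin n → Fin (m + 1)} {i : Fin n} {j : Fin m} :
    cell i j 0 0 ∈ staircase K L ↔ (j : ℕ) < K i := by
  rw [mem_staircase_iff, blockDiag_cell]
  simp [staircaseCell, cell, Prod.ext_iff]

lemma cell_one_zero_mem_staircase {K L : Fin n → Fin (m + 1)} {i : Fin n} {j : Fin m} :
    cell i j 1 0 ∈ staircase K L ↔ (j : ℕ) < L i := by
  rw [mem_staircase_iff, blockDiag_cell]
  simp [staircaseCell, cell, Prod.ext_iff]

lemma nonatt_staircase {K L : Fin n → Fin (m + 1)} (hK : Antitone K) (hL : Monotone L) :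
    Nonatt (staircase K L) := by
  suffices h : ∀ x y, (staircaseCell K L y).1 = (staircaseCell K L x).1.val + 1 →
      ¬PawnAdj (staircaseCell K L x) (staircaseCell K L y) by
    rintro _ hp _ hq - hadj
    obtain ⟨x, -, rfl⟩ := mem_image.1 hp
    obtain ⟨y, -, rfl⟩ := mem_image.1 hq
    rcases (pawnAdj_iff.1 hadj).1 with hrow | hrow
    · exact h y x hrow (pawnAdj_iff.2 (by rw [pawnAdj_iff] at hadj; omega))
    · exact h x y hrow hadj
  rintro ⟨i, j, _ | _⟩ ⟨i', j', _ | _⟩ hrow hadj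
  all_goals
    have hK₁ : (i : ℕ) ≤ i' → (K i' : ℕ) ≤ K i := fun h => hK (Fin.le_def.2 h)
    have hK₂ : (i' : ℕ) ≤ i → (K i : ℕ) ≤ K i' := fun h => hK (Fin.le_def.2 h)
    have hL₁ : (i : ℕ) ≤ i' → (L i : ℕ) ≤ L i' := fun h => hL (Fin.le_def.2 h)
    have hL₂ : (i' : ℕ) ≤ i → (L i' : ℕ) ≤ L i := fun h => hL (Fin.le_def.2 h)
    simp only [staircaseCell] at hrow hadj
    split_ifs at hrow hadj <;>
      simp only [cell, pawnAdj_iff, Fin.val_zero, Fin.val_one] at hrow hadj <;> omega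

section Maximal

variable {S : Finset (Fin (2 * n) × Fin (2 * m))}

lemma exists_mem_blockDiag_eq (hS : Nonatt S) (hcard : #S = 2 * m * n)
    (x : Fin n × Fin m × Bool) : ∃ p ∈ S, blockDiag p = x := by
  have hinj : Set.InjOn blockDiag S := fun p hp q hq h =>
    by_contra fun hne => hS p hp q hq hne (pawnAdj_of_blockDiag_eq h hne)
  have himage : S.image blockDiag = univ := by
    refine eq_univ_of_card _ ?_
    rw [card_image_of_injOn hinj, hcard]
    simp only [Fintype.card_prod, Fintype.card_fin, Fintype.card_bool]
    ring
  exact mem_image.1 (himage ▸ mem_univ x)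

lemma cell_zero_zero_mem_or (hS : Nonatt S) (hcard : #S = 2 * m * n) (i : Fin n) (j : Fin m) :
    cell i j 0 0 ∈ S ∨ cell i j 1 1 ∈ S := by
  obtain ⟨p, hp, hx⟩ := exists_mem_blockDiag_eq hS hcard (i, j, true)
  rcases blockDiag_eq_true_iff.1 hx with rfl | rfl <;> simp [hp]

lemma cell_one_zero_mem_or (hS : Nonatt S) (hcard : #S = 2 * m * n) (i : Fin n) (j : Fin m) :
    cell i j 1 0 ∈ S ∨ cell i j 0 1 ∈ S := by
  obtain ⟨p, hp, hx⟩ := exists_mem_blockDiag_eq hS hcard (i, j, false)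
  rcases blockDiag_eq_false_iff.1 hx with rfl | rfl <;> simp [hp]

variable (S) in
def topRun (i : Fin n) : Fin (m + 1) :=
  ⟨#{j | cell i j 0 0 ∈ S}, Nat.lt_succ_of_le ((card_le_univ _).trans (by simp))⟩

variable (S) in
def bottomRun (i : Fin n) : Fin (m + 1) :=
  ⟨#{j | cell i j 1 0 ∈ S}, Nat.lt_succ_of_le ((card_le_univ _).trans (by simp))⟩

lemma cell_zero_zero_mem_iff (hS : Nonatt S) (hcard : #S = 2 * m * n) {i : Fin n} {j : Fin m} :
    cell i j 0 0 ∈ S ↔ (j : ℕ) < topRun S i := by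
  refine Fin.iff_val_lt_card_filter_of_antitone (P := fun j => cell i j 0 0 ∈ S)
    (Fin.antitone_of_forall_val_add_one fun j j' hj h00 => ?_) j
  refine (cell_zero_zero_mem_or hS hcard i j).resolve_right fun h11 => ?_
  exact hS.not_pawnAdj h11 h00 (pawnAdj_cell_iff.2 (by rw [Fin.val_zero, Fin.val_one]; omega))

lemma cell_one_zero_mem_iff (hS : Nonatt S) (hcard : #S = 2 * m * n) {i : Fin n} {j : Fin m} :
    cell i j 1 0 ∈ S ↔ (j : ℕ) < bottomRun S i := by
  refine Fin.iff_val_lt_card_filter_of_antitone (P := fun j => cell i j 1 0 ∈ S)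
    (Fin.antitone_of_forall_val_add_one fun j j' hj h10 => ?_) j
  refine (cell_one_zero_mem_or hS hcard i j).resolve_right fun h01 => ?_
  exact hS.not_pawnAdj h01 h10 (pawnAdj_cell_iff.2 (by rw [Fin.val_zero, Fin.val_one]; omega))

lemma topRun_antitone (hS : Nonatt S) (hcard : #S = 2 * m * n) : Antitone (topRun S) := by
  refine Fin.antitone_of_forall_val_add_one fun i i' hi => le_of_not_gt fun hlt => ?_
  let j : Fin m := ⟨topRun S i, by have := (topRun S i').isLt; omega⟩
  have h00 : cell i' j 0 0 ∈ S := (cell_zero_zero_mem_iff hS hcard).2 hlt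
  have h11 : cell i j 1 1 ∈ S := (cell_zero_zero_mem_or hS hcard i j).resolve_left
    fun h => (lt_irrefl _ ((cell_zero_zero_mem_iff hS hcard).1 h))
  exact hS.not_pawnAdj h11 h00 (pawnAdj_cell_iff.2 (by rw [Fin.val_zero, Fin.val_one]; omega))

lemma bottomRun_monotone (hS : Nonatt S) (hcard : #S = 2 * m * n) : Monotone (bottomRun S) := by
  refine Fin.monotone_of_forall_val_add_one fun i i' hi => le_of_not_gt fun hlt => ?_
  let j : Fin m := ⟨bottomRun S i', by have := (bottomRun S i).isLt; omega⟩
  have h10 : cell i j 1 0 ∈ S := (cell_one_zero_mem_iff hS hcard).2 hlt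
  have h01 : cell i' j 0 1 ∈ S := (cell_one_zero_mem_or hS hcard i' j).resolve_left
    fun h => (lt_irrefl _ ((cell_one_zero_mem_iff hS hcard).1 h))
  exact hS.not_pawnAdj h10 h01 (pawnAdj_cell_iff.2 (by rw [Fin.val_zero, Fin.val_one]; omega))

lemma staircase_topRun_bottomRun (hS : Nonatt S) (hcard : #S = 2 * m * n) :
    staircase (topRun S) (bottomRun S) = S := by
  refine eq_of_subset_of_card_le (fun p hp => ?_) (by rw [hcard, card_staircase])
  obtain ⟨⟨i, j, _ | _⟩, -, rfl⟩ := mem_image.1 hp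
  · simp only [staircaseCell]
    split_ifs with h
    · exact (cell_one_zero_mem_iff hS hcard).2 h
    · exact (cell_one_zero_mem_or hS hcard i j).resolve_left
        (mt (cell_one_zero_mem_iff hS hcard).1 h)
  · simp only [staircaseCell]
    split_ifs with h
    · exact (cell_zero_zero_mem_iff hS hcard).2 h
    · exact (cell_zero_zero_mem_or hS hcard i j).resolve_left
        (mt (cell_zero_zero_mem_iff hS hcard).1 h)

end Maximal

lemma topRun_staircase (K L : Fin n → Fin (m + 1)) : topRun (staircase K L) = K := by
  ext i
  simp [topRun, cell_zero_zero_mem_staircase, Fin.card_filter_val_lt]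
  omega

lemma bottomRun_staircase (K L : Fin n → Fin (m + 1)) : bottomRun (staircase K L) = L := by
  ext i
  simp [bottomRun, cell_one_zero_mem_staircase, Fin.card_filter_val_lt]
  omega

lemma card_maximal_nonatt :
    #{S : Finset (Fin (2 * n) × Fin (2 * m)) | #S = 2 * m * n ∧ Nonatt S} =
      #(({K | Antitone K} : Finset (Fin n → Fin (m + 1))) ×ˢ
        ({L | Monotone L} : Finset (Fin n → Fin (m + 1)))) := by
  refine card_nbij' (fun S => (topRun S, bottomRun S)) (fun KL => staircase KL.1 KL.2)
    ?_ ?_ ?_ ?_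
  · intro S hS
    simp only [coe_filter, Set.mem_ofPred_eq, mem_univ, true_and] at hS
    simp [topRun_antitone hS.2 hS.1, bottomRun_monotone hS.2 hS.1]
  · rintro ⟨K, L⟩ hKL
    simp only [coe_product, coe_filter, Set.mem_prod, Set.mem_ofPred_eq, mem_univ,
      true_and] at hKL
    simp [card_staircase, nonatt_staircase hKL.1 hKL.2]
  · intro S hS
    simp only [coe_filter, Set.mem_ofPred_eq, mem_univ, true_and] at hS
    exact staircase_topRun_bottomRun hS.2 hS.1
  · rintro ⟨K, L⟩ -
    simp [topRun_staircase, bottomRun_staircase]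

end PawnBoard

theorem stmt5_general (m n : ℕ) :
    ((Finset.univ : Finset (Fin (2 * n) × Fin (2 * m))).powerset.filter
        (fun S => S.card = 2 * m * n ∧ Nonatt S)).card = (Nat.choose (m + n) n) ^ 2 := by
  rw [powerset_univ, PawnBoard.card_maximal_nonatt, card_product, Fin.card_filter_antitone,
    Fin.card_filter_monotone, Fintype.card_fin, Nat.add_right_comm m 1 n, Nat.add_sub_cancel, sq]

theorem stmt5 (m n : ℕ) (hm : 1 ≤ m) (hn : 1 ≤ n) :
    ((Finset.univ : Finset (Fin (2 * n) × Fin (2 * m))).powerset.filter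
        (fun S => S.card = 2 * m * n ∧ Nonatt S)).card = (Nat.choose (m + n) n) ^ 2 :=
  stmt5_general m n
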